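/- In the circulant graph G_n (odd n ≥ 5) with m = ⌊(n+1)/4⌋ and u_i = v_{im}, every vertex u_j distinct from u_i, u_{i+1}, u_{i+2} is adjacent to exactly one of u_i and u_{i+2}. -/

import Mathlib

/-- The `U`-switching of a graph: toggle exactly the edges between `U` and its complement. -/
def SimpleGraph.switch {V : Type*} (G : SimpleGraph V) (U : Set V) : SimpleGraph V where
  Adj a b := a ≠ b ∧ (G.Adj a b ↔ ((a ∈ U) ↔ (b ∈ U)))
  symm := ⟨fun a b => by
    rintro ⟨h, h2⟩
    refine ⟨h.symm, ?_⟩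
    rw [G.adj_comm]; tauto⟩
  loopless := ⟨fun a => by simp⟩

/-- The complete bipartite graph with parts `U` and `Uᶜ` on vertex set `V`. -/
def completeBipartite {V : Type*} (U : Set V) : SimpleGraph V where
  Adj a b := (a ∈ U ∧ b ∉ U) ∨ (b ∈ U ∧ a ∉ U)
  symm := ⟨fun a b => by tauto⟩
  loopless := ⟨fun a => by tauto⟩

/-- `W` is isolable in `G` if `2 ≤ |W|`, `2 ≤ |Wᶜ|`, and some switching of `G`
has no edges between `W` and `Wᶜ`. -/
def SimpleGraph.Isolable {V : Type*} (G : SimpleGraph V) (W : Set V) : Prop :=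
  2 ≤ W.ncard ∧ 2 ≤ Wᶜ.ncard ∧
    ∃ U : Set V, ∀ a ∈ W, ∀ b ∈ Wᶜ, ¬ (G.switch U).Adj a b

def SimpleGraph.SwitchingSeparable {V : Type*} (G : SimpleGraph V) : Prop :=
  ∃ W : Set V, G.Isolable W

/-- The number of edges of `G` among the pairs {a,c}, {a,d}, {b,c}, {b,d}. -/
noncomputable def SimpleGraph.N {V : Type*} (G : SimpleGraph V) (a b c d : V) : ℕ := by
  classical
  exact (if G.Adj a c then 1 else 0) + (if G.Adj a d then 1 else 0) +
    (if G.Adj b c then 1 else 0) + (if G.Adj b d then 1 else 0)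

/-- The circulant graph on `ZMod n` with connection set `{±1, …, ±⌊n/4⌋}`. -/
def circulant (n : ℕ) : SimpleGraph (ZMod n) :=
  SimpleGraph.fromRel (fun a b => ∃ j : ℕ, 1 ≤ j ∧ j ≤ n / 4 ∧ b = a + (j : ZMod n))

/-- Evaluation of a multilinear polynomial over GF(2), given by its coefficient function. -/
def mleval {k : ℕ} (c : Finset (Fin k) → ZMod 2) (x : Fin k → ZMod 2) : ZMod 2 :=
  ∑ s : Finset (Fin k), c s * ∏ i ∈ s, x i

/-- The multilinear polynomial `c` has degree at most `d`. -/
def mldegLE {k : ℕ} (c : Finset (Fin k) → ZMod 2) (d : ℕ) : Prop :=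
  ∀ s : Finset (Fin k), c s ≠ 0 → s.card ≤ d

/-- The graph of a quadratic polynomial: `i ~ j` iff the monomial `x i * x j` occurs. -/
def graphOf {k : ℕ} (c : Finset (Fin k) → ZMod 2) : SimpleGraph (Fin k) where
  Adj i j := i ≠ j ∧ c {i, j} ≠ 0
  symm := ⟨fun i j => by
    rintro ⟨h, h2⟩
    exact ⟨h.symm, by rwa [Finset.pair_comm]⟩⟩
  loopless := ⟨fun i => by simp⟩

/-- The polynomial `c` represents the extended Boolean function `f`
(i.e. they agree on all tuples with an even number of ones). -/
def Represents {k : ℕ} (c : Finset (Fin k) → ZMod 2) (f : (Fin k → ZMod 2) → ZMod 2) : Prop :=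
  ∀ x : Fin k → ZMod 2, (∑ i, x i) = 0 → mleval c x = f x

/-- An extended Boolean function in `k` arguments is separable if on its domain it is the
sum of two Boolean functions depending on disjoint argument sets of at most `k - 2` variables. -/
def EbfSeparable {k : ℕ} (f : (Fin k → ZMod 2) → ZMod 2) : Prop :=
  ∃ A B : Finset (Fin k), Disjoint A B ∧ A.card ≤ k - 2 ∧ B.card ≤ k - 2 ∧
    ∃ g h : (Fin k → ZMod 2) → ZMod 2,
      (∀ x y : Fin k → ZMod 2, (∀ i ∈ A, x i = y i) → g x = g y) ∧
      (∀ x y : Fin k → ZMod 2, (∀ i ∈ B, x i = y i) → h x = h y) ∧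
      ∀ x : Fin k → ZMod 2, (∑ i, x i) = 0 → f x = g x + h x

/-
An odd `n` is `4m ± 1`, so `m` is invertible in `ZMod n` and, with `k = ⌊n/4⌋`, `n = 2m + 2k + 1`.
Writing `x = (j - i)m`, the two adjacencies say that `x` and `x - 2m = x + (2k + 1)` lie in the
connection set `±{1, …, k}`; since `x ∉ {0, m, 2m}`, a comparison of representatives in
`[0, n)` shows that exactly one of them does.
-/

namespace ZMod

lemma val_sub_add_val_eq_or {n : ℕ} [NeZero n] (a b : ZMod n) :
    (a - b).val + b.val = a.val ∨ (a - b).val + b.val = a.val + n := by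
  rcases lt_or_ge ((a - b).val + b.val) n with h | h
  · left
    rw [← val_add_of_lt h, sub_add_cancel]
  · right
    rw [val_add_val_of_le h, sub_add_cancel]

lemma isUnit_natCast_add_one_div_four {n : ℕ} (hn : Odd n) :
    IsUnit (((n + 1) / 4 : ℕ) : ZMod n) := by
  set m := (n + 1) / 4
  have hn2 := Nat.odd_iff.mp hn
  rcases (by omega : m * 4 = n + 1 ∨ m * 4 + 1 = n) with h | h
  · refine IsUnit.of_mul_eq_one (4 : ZMod n) ?_
    simpa using congrArg (Nat.cast : ℕ → ZMod n) h
  · refine IsUnit.of_mul_eq_one (-4 : ZMod n) ?_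
    have h' : (m : ZMod n) * 4 + 1 = 0 := by simpa using congrArg (Nat.cast : ℕ → ZMod n) h
    linear_combination -h'

end ZMod

section Circulant

variable {n : ℕ}

lemma circulant_adj_add_right (a b c : ZMod n) :
    (circulant n).Adj (a + c) (b + c) ↔ (circulant n).Adj a b := by
  simp only [circulant, SimpleGraph.fromRel_adj, ne_eq, add_left_inj, add_right_comm _ c]

lemma circulant_adj_iff_adj_sub_zero (a b : ZMod n) :
    (circulant n).Adj a b ↔ (circulant n).Adj (a - b) 0 := by
  rw [← circulant_adj_add_right (a - b) 0 b, sub_add_cancel, zero_add]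

lemma circulant_adj_zero_iff [NeZero n] (x : ZMod n) :
    (circulant n).Adj x 0 ↔ x.val ≠ 0 ∧ (x.val ≤ n / 4 ∨ n - n / 4 ≤ x.val) := by
  have hn : n / 4 < n := Nat.div_lt_self (NeZero.pos n) (by norm_num)
  simp only [circulant, SimpleGraph.fromRel_adj, ne_eq, zero_add, ZMod.val_eq_zero,
    eq_comm (a := (0 : ZMod n)), add_eq_zero_iff_neg_eq]
  refine and_congr_right fun hx => ⟨?_, ?_⟩
  · rintro (⟨j, hj1, hjk, hxj⟩ | ⟨j, hj1, hjk, rfl⟩)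
    · have := congrArg ZMod.val hxj
      rw [ZMod.neg_val, if_neg hx, ZMod.val_cast_of_lt (by omega)] at this
      omega
    · rw [ZMod.val_cast_of_lt (by omega)]
      exact Or.inl hjk
  · have hx0 : 0 < x.val := ZMod.val_pos.mpr hx
    have hxn : x.val < n := x.val_lt
    rintro (h | h)
    · exact Or.inr ⟨x.val, by omega, h, (ZMod.natCast_zmod_val x).symm⟩
    · refine Or.inl ⟨n - x.val, by omega, by omega, ?_⟩
      rw [Nat.cast_sub x.val_lt.le, ZMod.natCast_self, ZMod.natCast_zmod_val, zero_sub]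

lemma xor_circulant_adj_mul_zero (hn : Odd n) {d : ZMod n} (hd0 : d ≠ 0) (hd1 : d ≠ 1)
    (hd2 : d ≠ 2) :
    Xor ((circulant n).Adj (d * (((n + 1) / 4 : ℕ) : ZMod n)) 0)
      ((circulant n).Adj ((d - 2) * (((n + 1) / 4 : ℕ) : ZMod n)) 0) := by
  have : NeZero n := ⟨hn.pos.ne'⟩
  have hn2 := Nat.odd_iff.mp hn
  set m := (n + 1) / 4
  have hm : IsUnit (m : ZMod n) := ZMod.isUnit_natCast_add_one_div_four hn
  have hval (c : ℕ) (h : (d * (m : ZMod n)).val = c * m) : d = c := by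
    apply hm.mul_left_inj.mp
    rw [← ZMod.natCast_zmod_val (d * (m : ZMod n)), h, Nat.cast_mul]
  have ht0 : (d * (m : ZMod n)).val ≠ 0 * m := fun h => hd0 (by simpa using hval 0 h)
  have ht1 : (d * (m : ZMod n)).val ≠ 1 * m := fun h => hd1 (by simpa using hval 1 h)
  have ht2 : (d * (m : ZMod n)).val ≠ 2 * m := fun h => hd2 (by simpa using hval 2 h)
  have hsub := ZMod.val_sub_add_val_eq_or (d * (m : ZMod n)) ((2 * m : ℕ) : ZMod n)
  rw [ZMod.val_cast_of_lt (by omega),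
    show d * m - ((2 * m : ℕ) : ZMod n) = (d - 2) * (m : ZMod n) by push_cast; ring] at hsub
  have := (d * (m : ZMod n)).val_lt
  have := ((d - 2) * (m : ZMod n)).val_lt
  rw [circulant_adj_zero_iff, circulant_adj_zero_iff]
  unfold Xor
  omega

end Circulant

theorem circulant_adjacent_exactly_one_general (n : ℕ) (hodd : Odd n) (i j : ZMod n)
    (h0 : j ≠ i) (h1 : j ≠ i + 1) (h2 : j ≠ i + 2) :
    Xor' ((circulant n).Adj (j * (((n + 1) / 4 : ℕ) : ZMod n))
            (i * (((n + 1) / 4 : ℕ) : ZMod n)))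
         ((circulant n).Adj (j * (((n + 1) / 4 : ℕ) : ZMod n))
            ((i + 2) * (((n + 1) / 4 : ℕ) : ZMod n))) := by
  rw [circulant_adj_iff_adj_sub_zero _ (i * _), circulant_adj_iff_adj_sub_zero _ ((i + 2) * _),
    ← sub_mul, ← sub_mul, sub_add_eq_sub_sub]
  exact xor_circulant_adj_mul_zero hodd (sub_ne_zero.mpr h0) (h1 ∘ sub_eq_iff_eq_add'.mp)
    (h2 ∘ sub_eq_iff_eq_add'.mp)

theorem circulant_adjacent_exactly_one (n : ℕ) (hodd : Odd n) (h5 : 5 ≤ n) (i j : ZMod n)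
    (h0 : j ≠ i) (h1 : j ≠ i + 1) (h2 : j ≠ i + 2) :
    Xor' ((circulant n).Adj (j * (((n + 1) / 4 : ℕ) : ZMod n))
            (i * (((n + 1) / 4 : ℕ) : ZMod n)))
         ((circulant n).Adj (j * (((n + 1) / 4 : ℕ) : ZMod n))
            ((i + 2) * (((n + 1) / 4 : ℕ) : ZMod n))) :=
  circulant_adjacent_exactly_one_general n hodd i j h0 h1 h2
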